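/- Let Σ be a d×d positive definite matrix with eigendecomposition Σ = U Λ Uᵀ where Λ = diag(λ₁,...,λ_d), and let γ > 0. Then the matrix A* = (γ / Tr(Λ^{1/2})) · U Λ^{-1/2} Uᵀ minimizes Tr(A⁻¹) over all positive definite matrices A satisfying Tr(A Σ) ≤ γ, and the optimal value is (Σᵢ √λᵢ)² / γ. -/

import Mathlib

open Matrix Finset

namespace GeoClipAux

variable {d : ℕ}

/-- Conjugation of a PD matrix by an orthogonal matrix is PD. -/
lemma conj_posDef (U M : Matrix (Fin d) (Fin d) ℝ) (hU : U * Uᵀ = 1)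
    (hM : M.PosDef) : (U * M * Uᵀ).PosDef := by
  refine posDef_iff_dotProduct_mulVec.mpr ⟨?_, ?_⟩
  · have := isHermitian_mul_mul_conjTranspose U hM.1
    rwa [conjTranspose_eq_transpose_of_trivial] at this
  · intro x hx
    have hx' : Uᵀ *ᵥ x ≠ 0 := by
      intro h
      apply hx
      have : U *ᵥ (Uᵀ *ᵥ x) = 0 := by rw [h, mulVec_zero]
      rwa [mulVec_mulVec, hU, one_mulVec] at this
    have := hM.dotProduct_mulVec_pos hx'
    have key : star x ⬝ᵥ (U * M * Uᵀ) *ᵥ x = star (Uᵀ *ᵥ x) ⬝ᵥ M *ᵥ (Uᵀ *ᵥ x) := by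
      have hUt : Uᵀ = Uᴴ := (conjTranspose_eq_transpose_of_trivial U).symm
      rw [hUt]
      simp only [star_mulVec, dotProduct_mulVec, vecMul_vecMul, conjTranspose_conjTranspose,
        ← Matrix.mul_assoc]
    rwa [key]

lemma diag_pos {B : Matrix (Fin d) (Fin d) ℝ} (hB : B.PosDef) (i : Fin d) :
    0 < B i i := by
  exact hB.diag_pos

open scoped MatrixOrder in
lemma inv_diag_le {B : Matrix (Fin d) (Fin d) ℝ} (hB : B.PosDef) (i : Fin d) :
    (B i i)⁻¹ ≤ B⁻¹ i i := by
  classical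
  set S := CFC.sqrt B with hSdef
  have hsym : Sᵀ = S :=
    (conjTranspose_eq_transpose_of_trivial S).symm.trans (nonneg_iff_posSemidef.mp (CFC.sqrt_nonneg B)).1
  have hsq : S * S = B := CFC.sqrt_mul_sqrt_self B hB.posSemidef.nonneg
  have hdet : IsUnit S.det := by
    have h2 : S.det * S.det = B.det := by rw [← det_mul, hsq]
    have : B.det ≠ 0 := ne_of_gt hB.det_pos
    refine isUnit_iff_ne_zero.mpr fun h => this ?_
    rw [← h2, h]; ring
  have hSinv : S * S⁻¹ = 1 := mul_nonsing_inv S hdet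
  have hone : (1 : ℝ) = ∑ j, S i j * S⁻¹ j i := by
    have := congrFun (congrFun hSinv i) i
    simpa [Matrix.mul_apply, Matrix.one_apply] using this.symm
  have hCS : (∑ j, S i j * S⁻¹ j i) ^ 2 ≤ (∑ j, (S i j) ^ 2) * (∑ j, (S⁻¹ j i) ^ 2) :=
    Finset.sum_mul_sq_le_sq_mul_sq _ _ _
  have h1 : (∑ j, (S i j) ^ 2) = B i i := by
    have := congrFun (congrFun hsq i) i
    rw [Matrix.mul_apply] at this
    rw [← this]
    refine Finset.sum_congr rfl fun j _ => ?_
    have : S j i = S i j := by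
      have := congrFun (congrFun hsym i) j
      simpa [Matrix.transpose_apply] using this
    rw [this]; ring
  have hinvsym : (S⁻¹)ᵀ = S⁻¹ := by rw [transpose_nonsing_inv, hsym]
  have hinvsq : S⁻¹ * S⁻¹ = B⁻¹ := by
    rw [← hsq, Matrix.mul_inv_rev]
  have h2 : (∑ j, (S⁻¹ j i) ^ 2) = B⁻¹ i i := by
    have := congrFun (congrFun hinvsq i) i
    rw [Matrix.mul_apply] at this
    rw [← this]
    refine Finset.sum_congr rfl fun j _ => ?_
    have hj : S⁻¹ i j = S⁻¹ j i := by
      have := congrFun (congrFun hinvsym j) i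
      simpa [Matrix.transpose_apply] using this
    rw [hj]; ring
  have hkey : 1 ≤ B i i * B⁻¹ i i := by
    calc (1:ℝ) = 1 ^ 2 := by ring
    _ = (∑ j, S i j * S⁻¹ j i) ^ 2 := by rw [← hone]
    _ ≤ (∑ j, (S i j) ^ 2) * (∑ j, (S⁻¹ j i) ^ 2) := hCS
    _ = B i i * B⁻¹ i i := by rw [h1, h2]
  have hBii := diag_pos hB i
  rw [inv_eq_one_div, div_le_iff₀ hBii]
  linarith [hkey]

lemma lower_bound {d : ℕ} (γ : ℝ) (hγ : 0 < γ)
    (U : Matrix (Fin d) (Fin d) ℝ) (lam : Fin d → ℝ) (hlam : ∀ i, 0 < lam i)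
    (hU : U * Uᵀ = 1)
    (A : Matrix (Fin d) (Fin d) ℝ) (hA : A.PosDef)
    (hTr : (A * (U * Matrix.diagonal lam * Uᵀ)).trace ≤ γ) :
    (∑ i, Real.sqrt (lam i))^2 / γ ≤ (A⁻¹).trace := by
  have hUtU : Uᵀ * U = 1 := mul_eq_one_comm.mp hU
  set B := Uᵀ * A * U with hBdef
  have hBpd : B.PosDef := by
    have := conj_posDef Uᵀ A (by rw [transpose_transpose]; exact hUtU) hA
    rwa [transpose_transpose] at this
  have hAA : A * A⁻¹ = 1 := mul_nonsing_inv A (isUnit_iff_isUnit_det A |>.mp hA.isUnit)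
  have htr1 : (B * Matrix.diagonal lam).trace = (A * (U * Matrix.diagonal lam * Uᵀ)).trace := by
    rw [show B * Matrix.diagonal lam = Uᵀ * (A * (U * Matrix.diagonal lam)) from by
      simp [hBdef, Matrix.mul_assoc]]
    rw [trace_mul_comm, Matrix.mul_assoc]
  have hdiagsum : (B * Matrix.diagonal lam).trace = ∑ i, B i i * lam i := by
    simp [Matrix.trace, Matrix.diag, Matrix.mul_diagonal]
  have hBinv : B⁻¹ = Uᵀ * A⁻¹ * U := by
    apply inv_eq_right_inv
    have h1 : U * (Uᵀ * (A⁻¹ * U)) = A⁻¹ * U := by rw [← Matrix.mul_assoc, hU, Matrix.one_mul]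
    have h2 : A * (A⁻¹ * U) = U := by rw [← Matrix.mul_assoc, hAA, Matrix.one_mul]
    calc (Uᵀ * A * U) * (Uᵀ * A⁻¹ * U)
        = Uᵀ * (A * (U * (Uᵀ * (A⁻¹ * U)))) := by simp only [Matrix.mul_assoc]
      _ = 1 := by rw [h1, h2, hUtU]
  have htrBinv : B⁻¹.trace = (A⁻¹).trace := by
    rw [hBinv, Matrix.mul_assoc, trace_mul_comm, Matrix.mul_assoc, hU, Matrix.mul_one]
  have hBdiag : ∀ i, 0 < B i i := fun i => diag_pos hBpd i
  have hstep : ∑ i, (B i i)⁻¹ ≤ B⁻¹.trace := by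
    rw [Matrix.trace]
    exact Finset.sum_le_sum fun i _ => inv_diag_le hBpd i
  have hCS : (∑ i, Real.sqrt (lam i))^2 ≤ (∑ i, B i i * lam i) * (∑ i, (B i i)⁻¹) :=
    Finset.sum_sq_le_sum_mul_sum_of_sq_eq_mul _
      (fun i _ => mul_nonneg (hBdiag i).le (hlam i).le)
      (fun i _ => inv_nonneg.mpr (hBdiag i).le)
      (fun i _ => by
        rw [Real.sq_sqrt (hlam i).le, mul_right_comm, mul_inv_cancel₀ (hBdiag i).ne', one_mul])
  have hc1 : (∑ i, B i i * lam i) ≤ γ := by rw [← hdiagsum, htr1]; exact hTr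
  have hc2 : 0 ≤ ∑ i, (B i i)⁻¹ :=
    Finset.sum_nonneg fun i _ => inv_nonneg.mpr (hBdiag i).le
  rw [div_le_iff₀ hγ]
  calc (∑ i, Real.sqrt (lam i))^2
      ≤ (∑ i, B i i * lam i) * (∑ i, (B i i)⁻¹) := hCS
    _ ≤ γ * (∑ i, (B i i)⁻¹) := mul_le_mul_of_nonneg_right hc1 hc2
    _ ≤ γ * B⁻¹.trace := by
        exact mul_le_mul_of_nonneg_left hstep hγ.le
    _ = (A⁻¹).trace * γ := by rw [htrBinv]; ring


lemma smul_posDef {d : ℕ} {c : ℝ} (hc : 0 < c) {M : Matrix (Fin d) (Fin d) ℝ}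
    (hM : M.PosDef) : (c • M).PosDef := by
  refine posDef_iff_dotProduct_mulVec.mpr ⟨?_, ?_⟩
  · rw [Matrix.IsHermitian, conjTranspose_smul, star_trivial, hM.1.eq]
  · intro x hx
    have := hM.dotProduct_mulVec_pos hx
    rw [smul_mulVec, dotProduct_smul, smul_eq_mul]
    exact mul_pos hc this

end GeoClipAux


open GeoClipAux in
/-- GeoClip optimal transformation (Theorem 2): the matrix
`A* = (γ / Tr(Λ^{1/2})) • U Λ^{-1/2} Uᵀ` is positive definite, feasible for the
constraint `Tr(A Σ) ≤ γ`, achieves objective value `(∑ √λᵢ)² / γ`, and minimizes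
`Tr(A⁻¹)` over all positive definite matrices satisfying the constraint. -/
theorem geoclip_optimal_transformation
    {d : ℕ} (hd : 0 < d) (γ : ℝ) (hγ : 0 < γ)
    (S U : Matrix (Fin d) (Fin d) ℝ) (lam : Fin d → ℝ)
    (hlam : ∀ i, 0 < lam i)
    (hU : U * Uᵀ = 1)
    (hS : S = U * Matrix.diagonal lam * Uᵀ)
    (Astar : Matrix (Fin d) (Fin d) ℝ)
    (hAstar : Astar = (γ / (∑ i, Real.sqrt (lam i))) •
      (U * Matrix.diagonal (fun i => (Real.sqrt (lam i))⁻¹) * Uᵀ)) :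
    Astar.PosDef ∧
    (Astar * S).trace ≤ γ ∧
    (Astar⁻¹).trace = (∑ i, Real.sqrt (lam i))^2 / γ ∧
    ∀ A : Matrix (Fin d) (Fin d) ℝ, A.PosDef → (A * S).trace ≤ γ →
      (Astar⁻¹).trace ≤ (A⁻¹).trace := by
  have hUtU : Uᵀ * U = 1 := mul_eq_one_comm.mp hU
  have hNe : Nonempty (Fin d) := Fin.pos_iff_nonempty.mp hd
  have hspos : 0 < ∑ i, Real.sqrt (lam i) :=
    Finset.sum_pos (fun i _ => Real.sqrt_pos.mpr (hlam i)) Finset.univ_nonempty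
  have hc : 0 < γ / (∑ i, Real.sqrt (lam i)) := div_pos hγ hspos
  have hsqrtlam : ∀ i, (Real.sqrt (lam i))⁻¹ * lam i = Real.sqrt (lam i) := fun i => by
    have h := Real.mul_self_sqrt (hlam i).le
    have hne : Real.sqrt (lam i) ≠ 0 := (Real.sqrt_pos.mpr (hlam i)).ne'
    field_simp
    rw [Real.sq_sqrt (hlam i).le]
  have htraceUEU : ∀ f : Fin d → ℝ, (U * Matrix.diagonal f * Uᵀ).trace = ∑ i, f i := fun f => by
    rw [trace_mul_cycle, hUtU, Matrix.one_mul, trace_diagonal]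
  have hPD : Astar.PosDef := by
    rw [hAstar]
    exact smul_posDef hc (conj_posDef U _ hU
      (Matrix.PosDef.diagonal fun i => inv_pos.mpr (Real.sqrt_pos.mpr (hlam i))))
  have hmid : U * Matrix.diagonal (fun i => (Real.sqrt (lam i))⁻¹) * Uᵀ *
      (U * Matrix.diagonal lam * Uᵀ) = U * Matrix.diagonal (fun i => Real.sqrt (lam i)) * Uᵀ := by
    calc U * Matrix.diagonal (fun i => (Real.sqrt (lam i))⁻¹) * Uᵀ *
        (U * Matrix.diagonal lam * Uᵀ)
        = U * (Matrix.diagonal (fun i => (Real.sqrt (lam i))⁻¹) *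
          ((Uᵀ * U) * (Matrix.diagonal lam * Uᵀ))) := by simp only [Matrix.mul_assoc]
      _ = U * Matrix.diagonal (fun i => Real.sqrt (lam i)) * Uᵀ := by
          rw [hUtU, Matrix.one_mul,
            ← Matrix.mul_assoc _ (Matrix.diagonal lam) Uᵀ, diagonal_mul_diagonal,
            show (fun i => (Real.sqrt (lam i))⁻¹ * lam i) = fun i => Real.sqrt (lam i) from
              funext hsqrtlam, Matrix.mul_assoc]
  have hfeas : (Astar * S).trace = γ := by
    rw [hAstar, hS, Matrix.smul_mul, trace_smul, hmid, htraceUEU, smul_eq_mul,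
      div_mul_cancel₀ γ hspos.ne']
  have hAinv : Astar⁻¹ = ((∑ i, Real.sqrt (lam i)) / γ) •
      (U * Matrix.diagonal (fun i => Real.sqrt (lam i)) * Uᵀ) := by
    apply inv_eq_right_inv
    rw [hAstar, Matrix.smul_mul, Matrix.mul_smul, smul_smul]
    have hXY : U * Matrix.diagonal (fun i => (Real.sqrt (lam i))⁻¹) * Uᵀ *
        (U * Matrix.diagonal (fun i => Real.sqrt (lam i)) * Uᵀ) = 1 := by
      calc U * Matrix.diagonal (fun i => (Real.sqrt (lam i))⁻¹) * Uᵀ *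
          (U * Matrix.diagonal (fun i => Real.sqrt (lam i)) * Uᵀ)
          = U * (Matrix.diagonal (fun i => (Real.sqrt (lam i))⁻¹) *
            ((Uᵀ * U) * (Matrix.diagonal (fun i => Real.sqrt (lam i)) * Uᵀ))) := by
            simp only [Matrix.mul_assoc]
        _ = 1 := by
            rw [hUtU, Matrix.one_mul,
              ← Matrix.mul_assoc _ (Matrix.diagonal fun i => Real.sqrt (lam i)) Uᵀ,
              diagonal_mul_diagonal,
              show (fun i => (Real.sqrt (lam i))⁻¹ * Real.sqrt (lam i)) = (fun _ => (1:ℝ)) from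
                funext fun i => inv_mul_cancel₀ (Real.sqrt_pos.mpr (hlam i)).ne',
              Matrix.diagonal_one, Matrix.one_mul, hU]
    rw [hXY, show γ / (∑ i, Real.sqrt (lam i)) * ((∑ i, Real.sqrt (lam i)) / γ) = 1 by
      field_simp, one_smul]
  have htrAinv : (Astar⁻¹).trace = (∑ i, Real.sqrt (lam i))^2 / γ := by
    rw [hAinv, trace_smul, htraceUEU, smul_eq_mul]
    field_simp
  refine ⟨hPD, le_of_eq hfeas, htrAinv, fun A hApd hTrA => ?_⟩
  rw [htrAinv]
  exact lower_bound γ hγ U lam hlam hU A hApd (hS ▸ hTrA)
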